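/- Let u be a global solution of the nonlinear obstacle problem on ℝ^d and suppose that u(x) − ½(x−x̄)·A(x−x̄) → 0 as |x| → ∞, where A ∈ S_d is positive semidefinite with F(A) = 1 and x̄ ∈ ℝ^d. Then u(x) = ½(x−x̄)·A(x−x̄) for all x ∈ ℝ^d. -/

import Mathlib

open MeasureTheory Metric Filter

attribute [local instance] Matrix.normedAddCommGroup Matrix.normedSpace

noncomputable def matOpNorm {d : ℕ} (M : Matrix (Fin d) (Fin d) ℝ) : ℝ :=
  ‖(Matrix.toEuclideanCLM (𝕜 := ℝ) M : EuclideanSpace ℝ (Fin d) →L[ℝ] EuclideanSpace ℝ (Fin d))‖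

def IsUniformlyElliptic {d : ℕ} (F : Matrix (Fin d) (Fin d) ℝ → ℝ) (Λ : ℝ) : Prop :=
  1 ≤ Λ ∧ ∀ M P : Matrix (Fin d) (Fin d) ℝ, M.IsSymm → P.IsSymm → P.PosSemidef →
    (1 / Λ) * matOpNorm P ≤ F (M + P) - F M ∧ F (M + P) - F M ≤ Λ * matOpNorm P

def IsGoodOperator {d : ℕ} (F : Matrix (Fin d) (Fin d) ℝ → ℝ) (Λ : ℝ) : Prop :=
  IsUniformlyElliptic F Λ ∧ ConvexOn ℝ {M | M.IsSymm} F ∧ ContDiffOn ℝ 1 F {M | M.IsSymm}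

/-- `u` solves the nonlinear obstacle problem for `F` on `Ω`. -/
def IsSolutionOn {d : ℕ} (F : Matrix (Fin d) (Fin d) ℝ → ℝ)
    (u : EuclideanSpace ℝ (Fin d) → ℝ) (Ω : Set (EuclideanSpace ℝ (Fin d))) : Prop :=
  ContDiffOn ℝ 1 u Ω ∧
  (∀ x ∈ Ω, ∃ (K : NNReal) (t : Set (EuclideanSpace ℝ (Fin d))),
    t ∈ nhdsWithin x Ω ∧ LipschitzOnWith K (gradient u) t) ∧
  (∀ x ∈ Ω, 0 ≤ u x) ∧
  ∃ H : EuclideanSpace ℝ (Fin d) → Matrix (Fin d) (Fin d) ℝ,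
    ∀ᵐ x ∂(volume : Measure (EuclideanSpace ℝ (Fin d))), x ∈ Ω →
      (H x).IsSymm ∧
      HasFDerivAt (gradient u)
        (Matrix.toEuclideanCLM (𝕜 := ℝ) (H x) :
          EuclideanSpace ℝ (Fin d) →L[ℝ] EuclideanSpace ℝ (Fin d)) x ∧
      F (H x) ≤ 1 ∧ (0 < u x → F (H x) = 1)

def contactSet {d : ℕ} (u : EuclideanSpace ℝ (Fin d) → ℝ) : Set (EuclideanSpace ℝ (Fin d)) :=
  {x | u x = 0}

def MemGc {d : ℕ} (F : Matrix (Fin d) (Fin d) ℝ → ℝ)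
    (u : EuclideanSpace ℝ (Fin d) → ℝ) : Prop :=
  IsSolutionOn F u Set.univ ∧ (contactSet u).Nonempty ∧ IsCompact (contactSet u)

noncomputable def quadPoly {d : ℕ} (A : Matrix (Fin d) (Fin d) ℝ)
    (x₀ : EuclideanSpace ℝ (Fin d)) (a : ℝ) (x : EuclideanSpace ℝ (Fin d)) : ℝ :=
  (1/2) * (inner ℝ (x - x₀) (Matrix.toEuclideanCLM (𝕜 := ℝ) A (x - x₀)) : ℝ) + a

def MemPc {d : ℕ} (F : Matrix (Fin d) (Fin d) ℝ → ℝ)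
    (Q : EuclideanSpace ℝ (Fin d) → ℝ) : Prop :=
  ∃ (A : Matrix (Fin d) (Fin d) ℝ) (x₀ : EuclideanSpace ℝ (Fin d)) (a : ℝ),
    A.IsSymm ∧ A.PosDef ∧ F A = 1 ∧ a ≤ 0 ∧ Q = quadPoly A x₀ a

/-- `f x = O(|x|^{2-d})` as `|x| → ∞`. -/
def DecaysAtInfinity (d : ℕ) (f : EuclideanSpace ℝ (Fin d) → ℝ) : Prop :=
  ∃ C R : ℝ, 0 < C ∧ 0 < R ∧ ∀ x : EuclideanSpace ℝ (Fin d),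
    R ≤ ‖x‖ → |f x| ≤ C * ‖x‖ ^ ((2 : ℝ) - d)

/-!
Put `w = u - Q` with `Q x = ½ (x - x̄)·A(x - x̄)`, so `w → 0` at infinity and `∇w = ∇u - A(x - x̄)`
is locally Lipschitz. If `w > 0` somewhere, then for every small `p` the tilted function
`w - ⟪p, ·⟫` has an interior maximum at some `x` with `w x > 0`, so `∇w x = p`. Where `D²u x`
exists, `D²u x ≤ A`, and `u x > Q x ≥ 0` forces `F (D²u x) = 1 = F A`; uniform ellipticity then
gives `D²u x = A`, i.e. `D(∇w) x = 0`. So a whole ball of values `p` lies in the image under `∇w`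
of a null set (null, as `∇w` is locally Lipschitz) and of the critical set of `∇w` (null by the
area formula): a contradiction. Minima treat `w < 0` in the same way, using `F (D²u) ≤ 1`.
-/

open Set Topology
open scoped NNReal RealInnerProductSpace

section LipschitzImage

variable {V : Type*} [NormedAddCommGroup V] [NormedSpace ℝ V] [FiniteDimensional ℝ V]
  [MeasurableSpace V] [BorelSpace V] (μ : Measure V) [μ.IsAddHaarMeasure]

/- Any Haar measure is equivalent to the `finrank`-dimensional Hausdorff measure, which Lipschitz
maps distort by at most a constant factor. -/
theorem LipschitzOnWith.addHaar_image_eq_zero {f : V → V} {K : ℝ≥0} {s : Set V}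
    (hf : LipschitzOnWith K f s) (hs : μ s = 0) : μ (f '' s) = 0 := by
  set n := Module.finrank ℝ V
  have hc := Measure.addHaarScalarFactor_volume_hausdorffMeasure_ne_zero n
  have hμH : (μH[n] : Measure V) ≪ μ :=
    (Measure.absolutelyContinuous_smul (by exact_mod_cast hc)).trans
      (Measure.absolutelyContinuous_isAddHaarMeasure (μHE[n] : Measure V) μ)
  have hHμ : μ ≪ (μH[n] : Measure V) :=
    (Measure.absolutelyContinuous_isAddHaarMeasure μ (μHE[n] : Measure V)).trans
      Measure.smul_absolutelyContinuous
  refine hHμ (le_antisymm ?_ bot_le)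
  calc μH[n] (f '' s) ≤ K ^ (n : ℝ) * μH[n] s := hf.hausdorffMeasure_image_le n.cast_nonneg
    _ = 0 := by rw [hμH hs, mul_zero]

theorem LocallyLipschitz.addHaar_image_eq_zero {f : V → V} (hf : LocallyLipschitz f) {s : Set V}
    (hs : μ s = 0) : μ (f '' s) = 0 := by
  choose K t ht hK using hf
  obtain ⟨c, hc, hcover⟩ := TopologicalSpace.countable_cover_nhds ht
  have hs_eq : s = ⋃ x ∈ c, s ∩ t x := by
    rw [← inter_iUnion₂, hcover, inter_univ]
  rw [hs_eq, image_iUnion₂]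
  exact (measure_biUnion_null_iff hc).2 fun x _ ↦
    ((hK x).mono inter_subset_right).addHaar_image_eq_zero μ
      (measure_mono_null inter_subset_left hs)

theorem addHaar_image_setOf_hasFDerivAt_zero [Nontrivial V] (f : V → V) :
    μ (f '' {x | HasFDerivAt f (0 : V →L[ℝ] V) x}) = 0 :=
  addHaar_image_eq_zero_of_det_fderivWithin_eq_zero μ (fun _ hx ↦ hx.hasFDerivWithinAt)
    fun _ _ ↦ by simp [ContinuousLinearMap.det]

end LipschitzImage

theorem IsLocalMax.nonpos_of_hasDerivAt_deriv {η ψ : ℝ → ℝ} {a c : ℝ} (hmax : IsLocalMax η a)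
    (hη : ∀ᶠ s in 𝓝 a, HasDerivAt η (ψ s) s) (hψ : HasDerivAt ψ c a) : c ≤ 0 := by
  by_contra! hc
  have hψa : ψ a = 0 := hmax.hasDerivAt_eq_zero hη.self_of_nhds
  have hψpos : ∀ᶠ s in 𝓝[>] a, 0 < ψ s := by
    filter_upwards [(hasDerivAt_iff_tendsto_slope.mp hψ).eventually (eventually_gt_nhds hc)
      |>.filter_mono (nhdsGT_le_nhdsNE a), self_mem_nhdsWithin] with s hs has
    exact pos_of_slope_pos has hs hψa
  obtain ⟨b, hab, hb⟩ := (nhdsGT_basis a).eventually_iff.mp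
    (hψpos.and ((hη.and hmax).filter_mono nhdsWithin_le_nhds))
  obtain ⟨t, hat, htb⟩ := nonempty_Ioo.mpr hab
  have hcont : ContinuousOn η (Icc a t) := fun s hs ↦ by
    rcases hs.1.eq_or_lt with rfl | has
    · exact hη.self_of_nhds.continuousAt.continuousWithinAt
    · exact (hb ⟨has, hs.2.trans_lt htb⟩).2.1.continuousAt.continuousWithinAt
  -- mean value theorem on `[a, t]`, where `η' = ψ > 0`: `η t > η a`, against the maximum at `a`
  obtain ⟨ξ, hξ, hslope⟩ := exists_hasDerivAt_eq_slope η ψ hat hcont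
    fun s hs ↦ (hb ⟨hs.1, hs.2.trans htb⟩).2.1
  have hpos : 0 < (η t - η a) / (t - a) := hslope ▸ (hb ⟨hξ.1, hξ.2.trans htb⟩).1
  rw [div_pos_iff_of_pos_right (sub_pos.mpr hat)] at hpos
  linarith [(hb ⟨hat, htb⟩).2.2]

section InnerProductSpace

variable {V : Type*} [NormedAddCommGroup V] [InnerProductSpace ℝ V]

section Gradient

variable [CompleteSpace V] {f g : V → ℝ} {f' g' x : V}

theorem HasGradientAt.sub (hf : HasGradientAt f f' x) (hg : HasGradientAt g g' x) :
    HasGradientAt (fun z ↦ f z - g z) (f' - g') x := by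
  rw [hasGradientAt_iff_hasFDerivAt, map_sub]
  exact hf.hasFDerivAt.sub hg.hasFDerivAt

theorem HasGradientAt.neg (hf : HasGradientAt f f' x) : HasGradientAt (fun z ↦ -f z) (-f') x := by
  rw [hasGradientAt_iff_hasFDerivAt, map_neg]
  exact hf.hasFDerivAt.neg

theorem hasGradientAt_inner_const_left (p x : V) : HasGradientAt (fun z ↦ ⟪p, z⟫) p x :=
  (InnerProductSpace.toDual ℝ V p).hasFDerivAt

theorem IsLocalMax.inner_apply_self_nonpos {φ : V → ℝ} {g : V → V} {L : V →L[ℝ] V}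
    (hmax : IsLocalMax φ x) (hφ : ∀ᶠ y in 𝓝 x, HasGradientAt φ (g y) y) (hg : HasFDerivAt g L x)
    (v : V) : ⟪L v, v⟫ ≤ 0 := by
  have hline : ∀ s : ℝ, HasDerivAt (fun s : ℝ ↦ x + s • v) v s := fun s ↦ by
    simpa using ((hasDerivAt_id s).smul_const v).const_add x
  have hline_tendsto : Tendsto (fun s : ℝ ↦ x + s • v) (𝓝 0) (𝓝 x) := by
    simpa using (hline 0).continuousAt.tendsto
  refine IsLocalMax.nonpos_of_hasDerivAt_deriv (η := fun s ↦ φ (x + s • v))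
    (ψ := fun s ↦ ⟪g (x + s • v), v⟫) (a := 0) ?_ ?_ ?_
  · have : IsLocalMax φ ((fun s : ℝ ↦ x + s • v) 0) := by simpa using hmax
    exact IsLocalMax.comp_continuous (g := fun s : ℝ ↦ x + s • v) this (hline 0).continuousAt
  · filter_upwards [hline_tendsto.eventually hφ] with s hs
    exact hs.hasFDerivAt.comp_hasDerivAt s (hline s)
  · have hgline : HasDerivAt (fun s : ℝ ↦ g (x + s • v)) (L v) 0 :=
      hg.comp_hasDerivAt_of_eq 0 (hline 0) (by simp)
    simpa using hgline.inner ℝ (hasDerivAt_const 0 v)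

end Gradient

/- The maximum of `w - ⟪p, ·⟫` over a ball containing `{w ≥ w y / 2}` stays inside that set
as long as the tilt `⟪p, ·⟫` is small on the ball. -/
theorem exists_isLocalMax_sub_inner_of_tendsto_cocompact [ProperSpace V] {w : V → ℝ} {y : V}
    (hw : Continuous w) (hy : 0 < w y) (hlim : Tendsto w (cocompact V) (𝓝 0)) :
    ∃ δ > 0, ∀ p : V, ‖p‖ ≤ δ → ∃ x, IsLocalMax (fun z ↦ w z - ⟪p, z⟫) x ∧ 0 < w x := by
  set ε := w y / 2 with hεdef
  have hε : 0 < ε := half_pos hy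
  obtain ⟨C, hC, hsub⟩ := mem_cocompact'.mp (hlim.eventually (eventually_lt_nhds hε))
  obtain ⟨R, hR⟩ := hC.isBounded.subset_ball (0 : V)
  have hK : ∀ z, ε ≤ w z → ‖z‖ < R := fun z hz ↦ mem_ball_zero_iff.mp (hR (hsub (not_lt.mpr hz)))
  have hyR : ‖y‖ < R := hK y (by linarith)
  have hRpos : 0 < R := (norm_nonneg y).trans_lt hyR
  refine ⟨ε / (4 * R), by positivity, fun p hp ↦ ?_⟩
  have htilt : ∀ z ∈ closedBall (0 : V) R, |⟪p, z⟫| ≤ ε / 4 := fun z hz ↦ by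
    calc |⟪p, z⟫| ≤ ‖p‖ * ‖z‖ := abs_real_inner_le_norm p z
      _ ≤ ε / (4 * R) * R :=
        mul_le_mul hp (mem_closedBall_zero_iff.mp hz) (norm_nonneg _) (by positivity)
      _ = ε / 4 := by field_simp
  have hyK : y ∈ closedBall (0 : V) R := mem_closedBall_zero_iff.mpr hyR.le
  obtain ⟨x, hxK, hxmax⟩ := (isCompact_closedBall (0 : V) R).exists_isMaxOn ⟨y, hyK⟩
    (f := fun z ↦ w z - ⟪p, z⟫) (by fun_prop)
  have hwx : ε ≤ w x := by
    have h1 : w y - ⟪p, y⟫ ≤ w x - ⟪p, x⟫ := hxmax hyK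
    have h2 := abs_le.mp (htilt x hxK)
    have h3 := abs_le.mp (htilt y hyK)
    linarith
  refine ⟨x, hxmax.isLocalMax (closedBall_mem_nhds_of_mem ?_), hε.trans_le hwx⟩
  exact mem_ball_zero_iff.mpr (hK x hwx)

theorem nonpos_of_hessian_eq_zero_of_negSemidef [FiniteDimensional ℝ V] [Nontrivial V]
    [MeasurableSpace V] [BorelSpace V] (μ : Measure V) [μ.IsAddHaarMeasure]
    {w : V → ℝ} {g : V → V} {D : V → V →L[ℝ] V} {N : Set V}
    (hw : ∀ y, HasGradientAt w (g y) y) (hg : LocallyLipschitz g)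
    (hlim : Tendsto w (cocompact V) (𝓝 0)) (hN : μ N = 0)
    (hD : ∀ x ∉ N, HasFDerivAt g (D x) x)
    (hcrit : ∀ x ∉ N, 0 < w x → (∀ v, ⟪D x v, v⟫ ≤ 0) → D x = 0) (y : V) :
    w y ≤ 0 := by
  by_contra! hy
  have hwc : Continuous w :=
    continuous_iff_continuousAt.mpr fun z ↦ (hw z).differentiableAt.continuousAt
  obtain ⟨δ, hδ, hmax⟩ := exists_isLocalMax_sub_inner_of_tendsto_cocompact hwc hy hlim
  have hball : closedBall 0 δ ⊆ g '' N ∪ g '' {x | HasFDerivAt g (0 : V →L[ℝ] V) x} := by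
    intro p hp
    obtain ⟨x, hx, hwx⟩ := hmax p (mem_closedBall_zero_iff.mp hp)
    have hgrad : ∀ z, HasGradientAt (fun z ↦ w z - ⟪p, z⟫) (g z - p) z :=
      fun z ↦ (hw z).sub (hasGradientAt_inner_const_left p z)
    have hgx : g x = p := by
      have := hx.hasFDerivAt_eq_zero (hgrad x).hasFDerivAt
      rwa [LinearIsometryEquiv.map_eq_zero_iff, sub_eq_zero] at this
    by_cases hxN : x ∈ N
    · exact Or.inl ⟨x, hxN, hgx⟩
    · have hD0 := hcrit x hxN hwx fun v ↦
        hx.inner_apply_self_nonpos (.of_forall hgrad) ((hD x hxN).sub_const p) v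
      exact Or.inr ⟨x, hD0 ▸ hD x hxN, hgx⟩
  have hnull := (measure_mono (μ := μ) hball).trans (measure_union_le _ _)
  rw [hg.addHaar_image_eq_zero μ hN, addHaar_image_setOf_hasFDerivAt_zero, add_zero] at hnull
  exact (measure_closedBall_pos μ 0 hδ).ne' (le_antisymm hnull bot_le)

end InnerProductSpace

section ObstacleProblem

variable {d : ℕ}

local notation "E" => EuclideanSpace ℝ (Fin d)
local notation "toCLM" => Matrix.toEuclideanCLM (𝕜 := ℝ) (n := Fin d)

theorem Matrix.isSymmetric_toEuclideanCLM {M : Matrix (Fin d) (Fin d) ℝ} (hM : M.IsSymm) :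
    (toCLM M).IsSymmetric :=
  isSymmetric_toEuclideanLin_iff.mpr (isHermitian_iff_isSymm.mpr hM)

theorem Matrix.posSemidef_of_inner_toEuclideanCLM_nonneg {M : Matrix (Fin d) (Fin d) ℝ}
    (hM : M.IsSymm) (h : ∀ v, 0 ≤ ⟪toCLM M v, v⟫) : M.PosSemidef :=
  isPositive_toEuclideanLin_iff.mp
    ((LinearMap.isPositive_iff _).mpr ⟨isSymmetric_toEuclideanCLM hM, h⟩)

theorem IsUniformlyElliptic.toEuclideanCLM_sub_eq_zero {F : Matrix (Fin d) (Fin d) ℝ → ℝ} {Λ : ℝ}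
    (hF : IsUniformlyElliptic F Λ) {M N : Matrix (Fin d) (Fin d) ℝ} (hM : M.IsSymm)
    (hN : N.IsSymm) (hMN : ∀ v, ⟪(toCLM M - toCLM N) v, v⟫ ≤ 0) (hFNM : F N ≤ F M) :
    toCLM M - toCLM N = 0 := by
  have hP : (N - M).PosSemidef := by
    refine Matrix.posSemidef_of_inner_toEuclideanCLM_nonneg (hN.sub hM) fun v ↦ ?_
    simpa [inner_sub_left] using hMN v
  have hgap := (hF.2 M (N - M) hM (hN.sub hM) hP).1
  rw [add_sub_cancel] at hgap
  have hnorm : matOpNorm (N - M) = 0 :=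
    le_antisymm (by nlinarith [one_div_pos.mpr (zero_lt_one.trans_le hF.1)]) (norm_nonneg _)
  rw [matOpNorm, norm_eq_zero, map_sub] at hnorm
  rw [← neg_sub, hnorm, neg_zero]

theorem hasGradientAt_quadPoly {A : Matrix (Fin d) (Fin d) ℝ} (hA : A.IsSymm) (x₀ : E) (a : ℝ)
    (x : E) : HasGradientAt (quadPoly A x₀ a) (toCLM A (x - x₀)) x := by
  have hshift : HasFDerivAt (fun z : E ↦ z - x₀) (ContinuousLinearMap.id ℝ E) x :=
    (hasFDerivAt_id x).sub_const x₀
  have := ((hshift.inner ℝ ((toCLM A).hasFDerivAt.comp x hshift)).const_mul (1 / 2)).add_const a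
  refine hasGradientAt_iff_hasFDerivAt.mpr (this.congr_fderiv ?_)
  ext v
  have hsym : ⟪toCLM A (x - x₀), v⟫ = ⟪x - x₀, toCLM A v⟫ :=
    Matrix.isSymmetric_toEuclideanCLM hA _ _
  simp only [InnerProductSpace.toDual_apply_apply, smul_apply, ContinuousLinearMap.comp_apply,
    ContinuousLinearMap.prod_apply, ContinuousLinearMap.id_apply, fderivInnerCLM_apply,
    Function.comp_apply, smul_eq_mul]
  rw [← hsym, real_inner_comm v]
  ring

theorem quadPoly_nonneg {A : Matrix (Fin d) (Fin d) ℝ} (hA : A.PosSemidef) (x₀ : E) {a : ℝ}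
    (ha : 0 ≤ a) (x : E) : 0 ≤ quadPoly A x₀ a x := by
  have := (Matrix.isPositive_toEuclideanLin_iff.mpr hA).inner_nonneg_right (x - x₀)
  unfold quadPoly
  positivity

theorem IsSolutionOn.hasGradientAt {F : Matrix (Fin d) (Fin d) ℝ → ℝ} {u : E → ℝ}
    (hu : IsSolutionOn F u univ) (x : E) : HasGradientAt u (gradient u x) x :=
  ((hu.1.differentiableOn one_ne_zero x (mem_univ x)).differentiableAt univ_mem).hasGradientAt

theorem IsSolutionOn.locallyLipschitz_gradient {F : Matrix (Fin d) (Fin d) ℝ → ℝ} {u : E → ℝ}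
    (hu : IsSolutionOn F u univ) : LocallyLipschitz (gradient u) := fun x ↦ by
  simpa [nhdsWithin_univ] using hu.2.1 x (mem_univ x)

theorem IsSolutionOn.exists_hessian_outside_null {F : Matrix (Fin d) (Fin d) ℝ → ℝ} {u : E → ℝ}
    (hu : IsSolutionOn F u univ) :
    ∃ (H : E → Matrix (Fin d) (Fin d) ℝ) (N : Set E), volume N = 0 ∧ ∀ x ∉ N,
      (H x).IsSymm ∧ HasFDerivAt (gradient u) (toCLM (H x)) x ∧ F (H x) ≤ 1 ∧
        (0 < u x → F (H x) = 1) := by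
  obtain ⟨H, hH⟩ := hu.2.2.2
  obtain ⟨G, hG, hHG⟩ := hH.exists_mem
  exact ⟨H, Gᶜ, hG, fun x hx ↦ hHG x (not_not.mp hx) (mem_univ x)⟩

end ObstacleProblem

/-- A global solution asymptotic to `½(x-x̄)·A(x-x̄)` equals that polynomial. -/
theorem statement16 (d : ℕ) (hd : 3 ≤ d) (Λ : ℝ)
    (F : Matrix (Fin d) (Fin d) ℝ → ℝ) (hF : IsGoodOperator F Λ)
    (u : EuclideanSpace ℝ (Fin d) → ℝ) (hu : IsSolutionOn F u Set.univ)
    (A : Matrix (Fin d) (Fin d) ℝ) (xBar : EuclideanSpace ℝ (Fin d))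
    (hAs : A.IsSymm) (hApsd : A.PosSemidef) (hFA : F A = 1)
    (hlim : Tendsto (fun x => u x - quadPoly A xBar 0 x)
      (Filter.cocompact (EuclideanSpace ℝ (Fin d))) (nhds 0)) :
    ∀ x : EuclideanSpace ℝ (Fin d), u x = quadPoly A xBar 0 x := by
  have : NeZero d := ⟨by omega⟩
  set T := Matrix.toEuclideanCLM (𝕜 := ℝ) (n := Fin d) A
  set w := fun x ↦ u x - quadPoly A xBar 0 x
  set g := fun x ↦ gradient u x - T (x - xBar)
  have hw : ∀ y, HasGradientAt w (g y) y := fun y ↦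
    (hu.hasGradientAt y).sub (hasGradientAt_quadPoly hAs xBar 0 y)
  have hg : LocallyLipschitz g := hu.locallyLipschitz_gradient.sub
    (by fun_prop : ContDiff ℝ 1 fun x ↦ T (x - xBar)).locallyLipschitz
  obtain ⟨H, N, hN, hH⟩ := hu.exists_hessian_outside_null
  have hD : ∀ x ∉ N, HasFDerivAt g (Matrix.toEuclideanCLM (𝕜 := ℝ) (H x) - T) x := fun x hx ↦
    (hH x hx).2.1.sub <|
      (T.hasFDerivAt.comp x ((hasFDerivAt_id x).sub_const xBar)).congr_fderiv T.comp_id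
  have hle : ∀ y, w y ≤ 0 := nonpos_of_hessian_eq_zero_of_negSemidef volume hw hg hlim hN hD
    fun x hx hwx hneg ↦ by
      obtain ⟨hHs, -, -, hF1⟩ := hH x hx
      have hux : 0 < u x := by linarith [quadPoly_nonneg hApsd xBar le_rfl x]
      exact hF.1.toEuclideanCLM_sub_eq_zero hHs hAs hneg (by rw [hFA, hF1 hux])
  have hge : ∀ y, -w y ≤ 0 := nonpos_of_hessian_eq_zero_of_negSemidef volume (fun y ↦ (hw y).neg)
    hg.neg (by simpa using hlim.neg) hN (fun x hx ↦ (hD x hx).neg) fun x hx _ hneg ↦ by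
      obtain ⟨hHs, -, hF1, -⟩ := hH x hx
      rw [neg_sub] at hneg ⊢
      exact hF.1.toEuclideanCLM_sub_eq_zero hAs hHs hneg (hFA ▸ hF1)
  intro x
  linarith [hle x, hge x]
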